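/- arXiv:1809.08782 — 2 statements merged into one kernel-verified Lean document; each statement's English description precedes it below -/
import Mathlib

section
/- Let c, S₀, U_j, U be real numbers with 0 < c < 1 and 0 < S₀ < U_j < U. Then G(c, S₀/U_j) < G(c, S₀/U); that is, normalizing by the smaller local maximum 2-norm U_j yields a strictly smaller query-time exponent ρ_j = G(c, S₀/U_j) than the exponent ρ = G(c, S₀/U) obtained by normalizing with the global maximum 2-norm U. -/
/-!
Write `p s = 1 - arccos s / π` (`collisionProb`), so that `G c s = log (p s) / log (p (c s))`.
Since `p' s = 1 / (π √(1 - s²))`, the sign of `∂ₛ G c s` is that of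
`c √(1 - s²) η(p s) - √(1 - c² s²) η(p (c s))`, where `η = negMulLog`. For `0 < s < 1` the three
factors `c < 1`, `√(1 - s²) < √(1 - c² s²)` and `η(p s) < η(p (c s))` all compare the same way,
the last because `η` decreases on `[1/e, ∞)` and `1/2 < p (c s) < p s`. So `G c` is strictly
decreasing on `(0, 1)`, which contains `S₀ / U < S₀ / U_j`.
-/

/-- The SIMPLE-LSH query-time exponent `ρ = G(c, S)`. -/
noncomputable def G (c S : ℝ) : ℝ :=
  Real.log (1 - Real.arccos S / Real.pi) / Real.log (1 - Real.arccos (c * S) / Real.pi)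

open Real Set

lemma strictAntiOn_negMulLog : StrictAntiOn negMulLog (Ici (exp (-1))) := by
  refine strictAntiOn_of_deriv_neg (convex_Ici _) continuous_negMulLog.continuousOn fun x hx ↦ ?_
  rw [interior_Ici] at hx
  have hx0 : 0 < x := (exp_pos _).trans hx
  rw [deriv_negMulLog hx0.ne']
  linarith [(lt_log_iff_exp_lt hx0).2 hx]

lemma negMulLog_pos {x : ℝ} (h0 : 0 < x) (h1 : x < 1) : 0 < negMulLog x := by
  rw [negMulLog, neg_mul, neg_pos]
  exact mul_neg_of_pos_of_neg h0 (log_neg h0 h1)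

/-- The collision probability of SIMPLE-LSH for two unit vectors with inner product `s`. -/
noncomputable def collisionProb (s : ℝ) : ℝ := 1 - arccos s / π

lemma collisionProb_pos {s : ℝ} (hs : -1 < s) : 0 < collisionProb s := by
  have : arccos s / π < 1 := (div_lt_one pi_pos).2 (arccos_lt_pi.2 hs)
  rw [collisionProb]
  linarith

lemma half_lt_collisionProb {s : ℝ} (hs : 0 < s) : 1 / 2 < collisionProb s := by
  have : arccos s / π < 1 / 2 := by
    rw [div_lt_iff₀ pi_pos]
    linarith [arccos_lt_pi_div_two.2 hs]
  rw [collisionProb]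
  linarith

lemma collisionProb_lt_one {s : ℝ} (hs : s < 1) : collisionProb s < 1 := by
  have : 0 < arccos s / π := div_pos (arccos_pos.2 hs) pi_pos
  rw [collisionProb]
  linarith

lemma log_collisionProb_neg {s : ℝ} (h₁ : -1 < s) (h₂ : s < 1) : log (collisionProb s) < 0 :=
  log_neg (collisionProb_pos h₁) (collisionProb_lt_one h₂)

lemma strictMonoOn_collisionProb : StrictMonoOn collisionProb (Icc (-1) 1) := fun _ hs _ ht hst ↦ by
  have := div_lt_div_of_pos_right (strictAntiOn_arccos hs ht hst) pi_pos
  rw [collisionProb, collisionProb]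
  linarith

lemma hasDerivAt_collisionProb {s : ℝ} (h₁ : s ≠ -1) (h₂ : s ≠ 1) :
    HasDerivAt collisionProb (1 / (π * √(1 - s ^ 2))) s :=
  (((hasDerivAt_arccos h₁ h₂).div_const π).const_sub 1).congr_deriv (by ring)

lemma hasDerivAt_log_collisionProb {s : ℝ} (h₁ : -1 < s) (h₂ : s < 1) :
    HasDerivAt (fun t ↦ log (collisionProb t)) (1 / (π * √(1 - s ^ 2)) / collisionProb s) s :=
  (hasDerivAt_collisionProb h₁.ne' h₂.ne).log (collisionProb_pos h₁).ne'

lemma sqrt_one_sub_sq_pos {s : ℝ} (h₁ : -1 < s) (h₂ : s < 1) : 0 < √(1 - s ^ 2) :=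
  sqrt_pos.2 (by nlinarith)

lemma mul_sqrt_mul_negMulLog_collisionProb_lt {c x : ℝ} (hc0 : 0 < c) (hc1 : c < 1)
    (hx0 : 0 < x) (hx1 : x < 1) :
    c * √(1 - x ^ 2) * negMulLog (collisionProb x)
      < √(1 - (c * x) ^ 2) * negMulLog (collisionProb (c * x)) := by
  have hcx0 : 0 < c * x := mul_pos hc0 hx0
  have hcx : c * x < x := mul_lt_of_lt_one_left hx0 hc1
  have hsqrt_pos := sqrt_one_sub_sq_pos (by linarith) hx1
  have hsqrt : √(1 - x ^ 2) < √(1 - (c * x) ^ 2) := sqrt_lt_sqrt (by nlinarith) (by nlinarith)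
  have hη_pos : 0 < negMulLog (collisionProb x) :=
    negMulLog_pos (collisionProb_pos (by linarith)) (collisionProb_lt_one hx1)
  have hη : negMulLog (collisionProb x) < negMulLog (collisionProb (c * x)) := by
    have hp := strictMonoOn_collisionProb ⟨by linarith, by linarith⟩ ⟨by linarith, hx1.le⟩ hcx
    have hq := (exp_neg_one_lt_half.trans (half_lt_collisionProb hcx0)).le
    exact strictAntiOn_negMulLog hq (hq.trans hp.le) hp
  calc c * √(1 - x ^ 2) * negMulLog (collisionProb x)
      = c * (√(1 - x ^ 2) * negMulLog (collisionProb x)) := mul_assoc _ _ _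
    _ < √(1 - x ^ 2) * negMulLog (collisionProb x) :=
      mul_lt_of_lt_one_left (mul_pos hsqrt_pos hη_pos) hc1
    _ < √(1 - (c * x) ^ 2) * negMulLog (collisionProb (c * x)) :=
      mul_lt_mul'' hsqrt hη hsqrt_pos.le hη_pos.le

lemma hasDerivAt_G {c x : ℝ} (hx₁ : -1 < x) (hx₂ : x < 1) (hcx₁ : -1 < c * x) (hcx₂ : c * x < 1) :
    HasDerivAt (G c)
      ((c * √(1 - x ^ 2) * negMulLog (collisionProb x)
          - √(1 - (c * x) ^ 2) * negMulLog (collisionProb (c * x)))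
        / (π * √(1 - x ^ 2) * √(1 - (c * x) ^ 2) * collisionProb x * collisionProb (c * x)
          * log (collisionProb (c * x)) ^ 2)) x := by
  have hlog_cx := (hasDerivAt_log_collisionProb hcx₁ hcx₂).comp x ((hasDerivAt_id x).const_mul c)
  refine ((hasDerivAt_log_collisionProb hx₁ hx₂).div hlog_cx
    (log_collisionProb_neg hcx₁ hcx₂).ne).congr_deriv ?_
  have := (collisionProb_pos hx₁).ne'
  have := (sqrt_one_sub_sq_pos hx₁ hx₂).ne'
  have := (sqrt_one_sub_sq_pos hcx₁ hcx₂).ne'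
  have := (collisionProb_pos hcx₁).ne'
  have := (log_collisionProb_neg hcx₁ hcx₂).ne
  simp only [negMulLog, Function.comp_apply, mul_one]
  -- otherwise `field_simp` normalizes `c * x` to `x * c` inside these atoms and loses the
  -- hypotheses that they do not vanish
  generalize √(1 - (c * x) ^ 2) = b at *
  generalize collisionProb (c * x) = Q at *
  field_simp
  ring

lemma strictAntiOn_G {c : ℝ} (hc0 : 0 < c) (hc1 : c < 1) : StrictAntiOn (G c) (Ioo 0 1) := by
  have hG {x : ℝ} (hx : x ∈ Ioo 0 1) : HasDerivAt (G c) _ x :=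
    hasDerivAt_G (by linarith [hx.1]) hx.2 (by nlinarith [hx.1]) (by nlinarith [hx.1, hx.2])
  refine strictAntiOn_of_deriv_neg (convex_Ioo 0 1)
    (fun x hx ↦ (hG hx).continuousAt.continuousWithinAt) fun x hx ↦ ?_
  rw [interior_Ioo] at hx
  obtain ⟨hx0, hx1⟩ := hx
  have hcx0 : 0 < c * x := mul_pos hc0 hx0
  have hcx1 : c * x < 1 := (mul_lt_of_lt_one_left hx0 hc1).trans hx1
  have := collisionProb_pos (s := x) (by linarith)
  have := collisionProb_pos (s := c * x) (by linarith)
  have := sqrt_one_sub_sq_pos (s := x) (by linarith) hx1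
  have := sqrt_one_sub_sq_pos (s := c * x) (by linarith) hcx1
  have := (log_collisionProb_neg (s := c * x) (by linarith) hcx1).ne
  rw [(hG ⟨hx0, hx1⟩).deriv]
  exact div_neg_of_neg_of_pos (sub_neg.2 (mul_sqrt_mul_negMulLog_collisionProb_lt hc0 hc1 hx0 hx1))
    (by positivity)

/-- Normalizing by a smaller local maximum 2-norm `U_j < U` yields a strictly smaller
query-time exponent: `G(c, S₀/U_j) < G(c, S₀/U)`. -/
theorem rangeLSH_smaller_rho (c S₀ Uj U : ℝ) (hc0 : 0 < c) (hc1 : c < 1)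
    (hS0 : 0 < S₀) (hSU : S₀ < Uj) (hUjU : Uj < U) :
    G c (S₀ / Uj) < G c (S₀ / U) := by
  have hUj : 0 < Uj := hS0.trans hSU
  have hlt : S₀ / U < S₀ / Uj := div_lt_div_of_pos_left hS0 hUj hUjU
  have hlt_one : S₀ / Uj < 1 := (div_lt_one hUj).2 hSU
  exact strictAntiOn_G hc0 hc1 ⟨div_pos hS0 (hUj.trans hUjU), hlt.trans hlt_one⟩
    ⟨div_pos hS0 hUj, hlt_one⟩ hlt
end

section
/- Fix r > 0 and define F_r(d) = 1 − 2Φ(−r/d) − (2d/(√(2π)·r))·(1 − exp(−(r/d)²/2)) for d > 0, where Φ(x) = ∫_{−∞}^{x} (1/√(2π))·exp(−t²/2) dt is the standard normal cumulative distribution function. Let c, U, S₀, u_{j−1}, u_j be real numbers and m a positive integer with 0 < c < 1, U > 0, S₀ > 0, 0 < u_{j−1} ≤ u_j ≤ S₀, and 1 + m/4 − 2US₀ > 0. Define ρ = log F_r(√(1 + m/4 − 2US₀ + (US₀)^{2^{m+1}})) / log F_r(√(1 + m/4 − 2cUS₀)) and ρ_j = log F_r(√(1 + m/4 − 2US₀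 + (Uu_j)^{2^{m+1}})) / log F_r(√(1 + m/4 − 2cUS₀ + (Uu_{j−1})^{2^{m+1}})). Then ρ_j < ρ. -/
open MeasureTheory

/-- The standard normal cumulative distribution function. -/
noncomputable def Phi (x : ℝ) : ℝ :=
  ∫ t in Set.Iic x, (1 / Real.sqrt (2 * Real.pi)) * Real.exp (-t ^ 2 / 2)

/-- The collision probability of the L2 LSH `h(x) = ⌊(aᵀx + b)/r⌋` at distance `d`. -/
noncomputable def Fcol (r d : ℝ) : ℝ :=
  1 - 2 * Phi (-r / d) - (2 * d / (Real.sqrt (2 * Real.pi) * r)) *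
    (1 - Real.exp (-(r / d) ^ 2 / 2))

/-!
With `R = r / d` and `φ` the standard normal density, evenness of `φ` and `(-φ)' = s φ(s)` give
`F_r(d) = 2 ∫₀^R φ(s) (1 - s/R) ds`. As `R` grows, both the range of integration and the weight
`1 - s/R` grow, so `F_r` decreases strictly from `(0, ∞)` into `(0, 1)`. Passing to the
sub-dataset lowers the distance in the numerator of the exponent (`u_j ≤ S₀`) and strictly
raises the one in the denominator (`u_{j-1} > 0`); since both logarithms are negative, the
quotient strictly drops.
-/

open Real Set ProbabilityTheory

section TentIntegral

variable {f : ℝ → ℝ}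

theorem integral_mul_one_sub_div_lt_of_lt (hf : Continuous f) (hf₀ : ∀ s, 0 < s → 0 < f s)
    {R₁ R₂ : ℝ} (h₁ : 0 < R₁) (h₁₂ : R₁ < R₂) :
    ∫ s in 0..R₁, f s * (1 - s / R₁) < ∫ s in 0..R₂, f s * (1 - s / R₂) := by
  have h₂ : 0 < R₂ := h₁.trans h₁₂
  have hcont : ∀ R, Continuous fun s => f s * (1 - s / R) := fun R => by fun_prop
  have hweight : ∀ s, 0 < s → s ≤ R₁ → f s * (1 - s / R₁) ≤ f s * (1 - s / R₂) := by
    intro s hs _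
    have : s / R₂ ≤ s / R₁ := div_le_div_of_nonneg_left hs.le h₁ h₁₂.le
    nlinarith [hf₀ s hs]
  have hgrow : ∫ s in 0..R₁, f s * (1 - s / R₁) < ∫ s in 0..R₁, f s * (1 - s / R₂) := by
    refine intervalIntegral.integral_lt_integral_of_continuousOn_of_le_of_exists_lt h₁
      (hcont R₁).continuousOn (hcont R₂).continuousOn (fun s hs => hweight s hs.1 hs.2)
      ⟨R₁, right_mem_Icc.2 h₁.le, ?_⟩
    rw [div_self h₁.ne', sub_self, mul_zero]
    exact mul_pos (hf₀ R₁ h₁) (by rw [sub_pos, div_lt_one h₂]; exact h₁₂)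
  have htail : 0 ≤ ∫ s in R₁..R₂, f s * (1 - s / R₂) := by
    refine intervalIntegral.integral_nonneg h₁₂.le fun s hs => ?_
    have : s / R₂ ≤ 1 := (div_le_one h₂).2 hs.2
    nlinarith [hf₀ s (h₁.trans_le hs.1)]
  rw [← intervalIntegral.integral_add_adjacent_intervals ((hcont R₂).intervalIntegrable 0 R₁)
    ((hcont R₂).intervalIntegrable R₁ R₂)]
  linarith

theorem integral_mul_one_sub_div_pos (hf : Continuous f) (hf₀ : ∀ s, 0 < s → 0 < f s)
    {R : ℝ} (hR : 0 < R) : 0 < ∫ s in 0..R, f s * (1 - s / R) := by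
  have hcont : Continuous fun s => f s * (1 - s / R) := by fun_prop
  refine intervalIntegral.intervalIntegral_pos_of_pos_on (hcont.intervalIntegrable _ _)
    (fun s hs => ?_) hR
  have : s / R < 1 := (div_lt_one hR).2 hs.2
  nlinarith [hf₀ s hs.1]

end TentIntegral

section Gaussian

noncomputable def phi (t : ℝ) : ℝ := 1 / √(2 * π) * exp (-t ^ 2 / 2)

theorem phi_pos (t : ℝ) : 0 < phi t := by unfold phi; positivity

theorem continuous_phi : Continuous phi := by unfold phi; fun_prop

theorem phi_neg (t : ℝ) : phi (-t) = phi t := by simp [phi]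

theorem hasDerivAt_phi (t : ℝ) : HasDerivAt phi (-(t * phi t)) t := by
  have h : HasDerivAt (fun u : ℝ => -u ^ 2 / 2) (-t) t :=
    ((hasDerivAt_pow 2 t).fun_neg.div_const 2).congr_deriv (by ring)
  exact (h.exp.const_mul _).congr_deriv (by simp only [phi]; ring)

theorem phi_eq_gaussianPDFReal : phi = gaussianPDFReal 0 1 := by
  ext t; simp [phi, gaussianPDFReal]

theorem integrable_phi : Integrable phi :=
  phi_eq_gaussianPDFReal ▸ integrable_gaussianPDFReal 0 1

theorem integral_phi : ∫ t, phi t = 1 :=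
  phi_eq_gaussianPDFReal ▸ integral_gaussianPDFReal_eq_one 0 one_ne_zero

theorem Phi_eq_setIntegral_phi (x : ℝ) : Phi x = ∫ t in Iic x, phi t := rfl

theorem Phi_sub_Phi (a b : ℝ) : Phi b - Phi a = ∫ t in a..b, phi t :=
  intervalIntegral.integral_Iic_sub_Iic integrable_phi.integrableOn integrable_phi.integrableOn

theorem Phi_pos (x : ℝ) : 0 < Phi x := by
  have hstep : 0 < Phi x - Phi (x - 1) := by
    rw [Phi_sub_Phi]
    exact intervalIntegral.intervalIntegral_pos_of_pos_on
      (continuous_phi.intervalIntegrable _ _) (fun t _ => phi_pos t) (by linarith)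
  have : 0 ≤ Phi (x - 1) := setIntegral_nonneg measurableSet_Iic fun t _ => (phi_pos t).le
  linarith

theorem Phi_neg (x : ℝ) : Phi (-x) = 1 - Phi x := by
  have hreflect : Phi (-x) = ∫ t in Ioi x, phi t := by
    rw [Phi_eq_setIntegral_phi, ← neg_neg x, ← integral_comp_neg_Ioi, neg_neg]
    simp only [phi_neg]
  rw [hreflect, ← integral_phi, ← intervalIntegral.integral_Iic_add_Ioi
    integrable_phi.integrableOn integrable_phi.integrableOn, Phi_eq_setIntegral_phi]
  ring

theorem one_sub_two_mul_Phi_neg (R : ℝ) : 1 - 2 * Phi (-R) = 2 * ∫ s in 0..R, phi s := by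
  have hhalf : Phi 0 = 1 / 2 := by linarith [neg_zero (G := ℝ) ▸ Phi_neg 0]
  rw [← Phi_sub_Phi, Phi_neg, hhalf]
  ring

theorem integral_mul_phi (R : ℝ) : ∫ s in 0..R, s * phi s = phi 0 - phi R := by
  have hderiv : ∀ s, HasDerivAt (fun s => -phi s) (s * phi s) s := fun s =>
    (hasDerivAt_phi s).neg.congr_deriv (neg_neg _)
  rw [intervalIntegral.integral_eq_sub_of_hasDerivAt (fun s _ => hderiv s)
    ((continuous_id.mul continuous_phi).intervalIntegrable _ _)]
  ring

end Gaussian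

theorem Fcol_eq_integral (r d : ℝ) :
    Fcol r d = 2 * ∫ s in 0..r / d, phi s * (1 - s / (r / d)) := by
  set R := r / d
  have hsplit : ∫ s in 0..R, phi s * (1 - s / R)
      = (∫ s in 0..R, phi s) - (∫ s in 0..R, s * phi s) / R := by
    rw [← intervalIntegral.integral_div,
      ← intervalIntegral.integral_sub (g := fun s => s * phi s / R)
      (continuous_phi.intervalIntegrable _ _)
      (((continuous_id.mul continuous_phi).div_const R).intervalIntegrable _ _)]
    exact intervalIntegral.integral_congr fun s _ => by ring
  rw [hsplit, integral_mul_phi, mul_sub, ← one_sub_two_mul_Phi_neg, Fcol, neg_div]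
  norm_num [phi, R]
  field_simp

theorem Fcol_pos {r d : ℝ} (hr : 0 < r) (hd : 0 < d) : 0 < Fcol r d := by
  rw [Fcol_eq_integral]
  exact mul_pos two_pos
    (integral_mul_one_sub_div_pos continuous_phi (fun s _ => phi_pos s) (by positivity))

theorem Fcol_lt_one {r d : ℝ} (hr : 0 < r) (hd : 0 < d) : Fcol r d < 1 := by
  have hexp : exp (-(r / d) ^ 2 / 2) < 1 := exp_lt_one_iff.2 (by have := div_pos hr hd; nlinarith)
  have hlin : 0 < 2 * d / (√(2 * π) * r) * (1 - exp (-(r / d) ^ 2 / 2)) :=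
    mul_pos (by positivity) (by linarith)
  have := Phi_pos (-r / d)
  unfold Fcol
  linarith

theorem strictAntiOn_Fcol {r : ℝ} (hr : 0 < r) : StrictAntiOn (Fcol r) (Ioi 0) := by
  intro d₁ hd₁ d₂ hd₂ h
  rw [Fcol_eq_integral r d₁, Fcol_eq_integral r d₂]
  exact mul_lt_mul_of_pos_left (integral_mul_one_sub_div_lt_of_lt continuous_phi
    (fun s _ => phi_pos s) (div_pos hr hd₂) (div_lt_div_of_pos_left hr hd₁ h)) two_pos

theorem strictAntiOn_Fcol_sqrt {r : ℝ} (hr : 0 < r) :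
    StrictAntiOn (fun x => Fcol r √x) (Ioi 0) :=
  fun _ hx _ hy hxy => strictAntiOn_Fcol hr (sqrt_pos.2 hx) (sqrt_pos.2 hy) (sqrt_lt_sqrt hx.le hxy)

theorem log_div_log_lt_of_le_of_lt {x x' y y' : ℝ} (hx : 0 < x) (hxx' : x ≤ x') (hx₁ : x < 1)
    (hy' : 0 < y') (hy'y : y' < y) (hy₁ : y < 1) :
    log x' / log y' < log x / log y := by
  have hlogx : log x < 0 := log_neg hx hx₁
  have hlogy : log y < 0 := log_neg (hy'.trans hy'y) hy₁
  have hlogy' : log y' < log y := log_lt_log hy' hy'y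
  rw [← neg_div_neg_eq (log x'), ← neg_div_neg_eq (log x)]
  calc -log x' / -log y' ≤ -log x / -log y' := by
        gcongr
        linarith
    _ < -log x / -log y := div_lt_div_of_pos_left (by linarith) (by linarith) (by linarith)

theorem l2alsh_range_smaller_rho_general (r c U S₀ u₀ u₁ : ℝ) (m : ℕ)
    (hr : 0 < r) (hc1 : c < 1) (hU : 0 < U) (hS₀ : 0 < S₀)
    (hu₀ : 0 < u₀) (hu₀u₁ : u₀ ≤ u₁) (hu₁ : u₁ ≤ S₀)
    (hpos : 0 < 1 + (m : ℝ) / 4 - 2 * U * S₀)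
    (ρ ρj : ℝ)
    (hρ : ρ = Real.log (Fcol r (Real.sqrt (1 + (m : ℝ) / 4 - 2 * U * S₀
            + (U * S₀) ^ (2 ^ (m + 1))))) /
          Real.log (Fcol r (Real.sqrt (1 + (m : ℝ) / 4 - 2 * c * U * S₀))))
    (hρj : ρj = Real.log (Fcol r (Real.sqrt (1 + (m : ℝ) / 4 - 2 * U * S₀
            + (U * u₁) ^ (2 ^ (m + 1))))) /
          Real.log (Fcol r (Real.sqrt (1 + (m : ℝ) / 4 - 2 * c * U * S₀
            + (U * u₀) ^ (2 ^ (m + 1)))))) :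
    ρj < ρ := by
  have hF := strictAntiOn_Fcol_sqrt hr
  have hFpos : ∀ x, 0 < x → 0 < Fcol r √x := fun x hx => Fcol_pos hr (sqrt_pos.2 hx)
  have hFlt : ∀ x, 0 < x → Fcol r √x < 1 := fun x hx => Fcol_lt_one hr (sqrt_pos.2 hx)
  have hUu₁ : 0 ≤ U * u₁ := (mul_pos hU (hu₀.trans_le hu₀u₁)).le
  have hfar : 0 < 1 + (m : ℝ) / 4 - 2 * U * S₀ + (U * S₀) ^ 2 ^ (m + 1) :=
    add_pos_of_pos_of_nonneg hpos (by positivity)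
  have hnear : 0 < 1 + (m : ℝ) / 4 - 2 * c * U * S₀ := by nlinarith [mul_pos hU hS₀]
  have hnum : 1 + (m : ℝ) / 4 - 2 * U * S₀ + (U * u₁) ^ 2 ^ (m + 1)
      ≤ 1 + (m : ℝ) / 4 - 2 * U * S₀ + (U * S₀) ^ 2 ^ (m + 1) := by gcongr
  have hden : 1 + (m : ℝ) / 4 - 2 * c * U * S₀
      < 1 + (m : ℝ) / 4 - 2 * c * U * S₀ + (U * u₀) ^ 2 ^ (m + 1) :=
    lt_add_of_pos_right _ (by positivity)
  rw [hρ, hρj]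
  exact log_div_log_lt_of_le_of_lt (hFpos _ hfar)
    ((hF.le_iff_ge hfar (add_pos_of_pos_of_nonneg hpos (by positivity))).2 hnum) (hFlt _ hfar)
    (hFpos _ (hnear.trans hden)) (hF hnear (hnear.trans hden) hden) (hFlt _ hnear)

/-- Norm-range partitioning improves the L2-ALSH exponent: restricting to a sub-dataset
whose 2-norms lie in `(u_{j-1}, u_j]` with `0 < u_{j-1} ≤ u_j ≤ S₀` yields `ρ_j < ρ`. -/
theorem l2alsh_range_smaller_rho (r c U S₀ u₀ u₁ : ℝ) (m : ℕ)
    (hr : 0 < r) (hc0 : 0 < c) (hc1 : c < 1) (hU : 0 < U) (hS₀ : 0 < S₀)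
    (hm : 0 < m) (hu₀ : 0 < u₀) (hu₀u₁ : u₀ ≤ u₁) (hu₁ : u₁ ≤ S₀)
    (hpos : 0 < 1 + (m : ℝ) / 4 - 2 * U * S₀)
    (ρ ρj : ℝ)
    (hρ : ρ = Real.log (Fcol r (Real.sqrt (1 + (m : ℝ) / 4 - 2 * U * S₀
            + (U * S₀) ^ (2 ^ (m + 1))))) /
          Real.log (Fcol r (Real.sqrt (1 + (m : ℝ) / 4 - 2 * c * U * S₀))))
    (hρj : ρj = Real.log (Fcol r (Real.sqrt (1 + (m : ℝ) / 4 - 2 * U * S₀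
            + (U * u₁) ^ (2 ^ (m + 1))))) /
          Real.log (Fcol r (Real.sqrt (1 + (m : ℝ) / 4 - 2 * c * U * S₀
            + (U * u₀) ^ (2 ^ (m + 1)))))) :
    ρj < ρ :=
  l2alsh_range_smaller_rho_general r c U S₀ u₀ u₁ m hr hc1 hU hS₀ hu₀ hu₀u₁ hu₁ hpos ρ ρj hρ hρj
end
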